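/- arXiv:math/0404436 — 2 statements merged into one kernel-verified Lean document; each statement's English description precedes it below -/
import Mathlib

section
/- If p : [0,∞) → ℝ is a differentiable nonnegative function satisfying p·p' = -p² for all t ≥ 0, then p(t) = p(0)·e^{-t} for all t ≥ 0. -/
/-! Since `p p' = -p²`, the function `p² e^{2t}` has derivative `2 e^{2t} (p p' + p²) = 0`, so it is
constant; taking nonnegative square roots gives `p t = p 0 · e^{-t}`. -/

open Real Set

section

variable {f f' : ℝ → ℝ} {a k : ℝ}

theorem hasDerivWithinAt_sq_mul_exp {s : Set ℝ} {x : ℝ} (hf : HasDerivWithinAt f (f' x) s x) :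
    HasDerivWithinAt (fun y => f y ^ 2 * exp (2 * k * y))
      (2 * exp (2 * k * x) * (f x * f' x + k * f x ^ 2)) s x := by
  have hexp : HasDerivWithinAt (fun y => exp (2 * k * y)) (exp (2 * k * x) * (2 * k)) s x :=
    ((hasDerivAt_id x).const_mul (2 * k)).exp.hasDerivWithinAt.congr_deriv (by simp)
  exact ((hf.pow 2).mul hexp).congr_deriv (by simp only [Pi.pow_apply]; push_cast; ring)

theorem sq_mul_exp_eq_of_mul_deriv_eq
    (hf : ∀ x ∈ Ici a, HasDerivWithinAt f (f' x) (Ici a) x)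
    (hode : ∀ x ∈ Ici a, f x * f' x = -k * f x ^ 2) :
    ∀ t ∈ Ici a, f t ^ 2 * exp (2 * k * t) = f a ^ 2 * exp (2 * k * a) := by
  intro t ht
  have hcont : ContinuousOn (fun y => f y ^ 2 * exp (2 * k * y)) (Icc a t) := fun x hx =>
    (hasDerivWithinAt_sq_mul_exp (hf x hx.1)).continuousWithinAt.mono Icc_subset_Ici_self
  refine constant_of_has_deriv_right_zero hcont (fun x hx => ?_) t ⟨ht, le_rfl⟩
  have hderiv := hasDerivWithinAt_sq_mul_exp (k := k) (hf x hx.1)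
  rw [hode x hx.1, neg_mul, neg_add_cancel, mul_zero] at hderiv
  exact hderiv.mono (Ici_subset_Ici.mpr hx.1)

theorem eq_mul_exp_of_mul_deriv_eq
    (hnn : ∀ x ∈ Ici a, 0 ≤ f x)
    (hf : ∀ x ∈ Ici a, HasDerivWithinAt f (f' x) (Ici a) x)
    (hode : ∀ x ∈ Ici a, f x * f' x = -k * f x ^ 2) :
    ∀ t ∈ Ici a, f t = f a * exp (-k * (t - a)) := by
  intro t ht
  have hconst := sq_mul_exp_eq_of_mul_deriv_eq hf hode t ht
  have hsq : f t ^ 2 = (f a * exp (-k * (t - a))) ^ 2 := by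
    rw [mul_pow, ← exp_nat_mul, ← mul_right_cancel_iff_of_pos (exp_pos (2 * k * t)), hconst,
      mul_assoc (f a ^ 2), ← exp_add]
    congr 2
    push_cast
    ring
  have hrhs : 0 ≤ f a * exp (-k * (t - a)) := mul_nonneg (hnn a self_mem_Ici) (exp_pos _).le
  exact (pow_left_inj₀ (hnn t ht) hrhs two_ne_zero).mp hsq

end

theorem dsm_decay (p p' : ℝ → ℝ)
    (hnn : ∀ t ∈ Ici (0:ℝ), 0 ≤ p t)
    (hderiv : ∀ t ∈ Ici (0:ℝ), HasDerivWithinAt p (p' t) (Ici 0) t)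
    (heq : ∀ t ∈ Ici (0:ℝ), p t * p' t = -(p t)^2) :
    ∀ t ∈ Ici (0:ℝ), p t = p 0 * Real.exp (-t) := by
  intro t ht
  have hode : ∀ x ∈ Ici (0:ℝ), p x * p' x = -1 * p x ^ 2 := fun x hx => by
    rw [heq x hx, neg_one_mul]
  simpa using eq_mul_exp_of_mul_deriv_eq hnn hderiv hode t ht
end

section
/- Let H be a real Hilbert space, F : H → H continuous monotone, and for each ε > 0 let v_ε satisfy F(v_ε) + ε·v_ε = 0. Assume F has at least one zero. Then as ε → 0⁺, v_ε converges strongly to the unique minimal-norm zero of F. -/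
open scoped RealInnerProductSpace
open Filter

theorem regularized_converges_to_minimal_norm {H : Type*} [NormedAddCommGroup H]
    [InnerProductSpace ℝ H] [CompleteSpace H] (F : H → H) (hFc : Continuous F)
    (hFm : ∀ x y : H, 0 ≤ ⟪F x - F y, x - y⟫)
    (v : ℝ → H) (hv : ∀ ε : ℝ, 0 < ε → F (v ε) + ε • v ε = 0)
    (hzero : ∃ z : H, F z = 0) :
    ∃ v₀ : H, F v₀ = 0 ∧ (∀ z : H, F z = 0 → ‖v₀‖ ≤ ‖z‖) ∧
      Tendsto v (nhdsWithin 0 (Set.Ioi 0)) (nhds v₀) := by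
  obtain ⟨z, hz⟩ := hzero
  have hF' : ∀ ε : ℝ, 0 < ε → F (v ε) = -(ε • v ε) := fun ε hε =>
    eq_neg_of_add_eq_zero_left (hv ε hε)
  -- Lemma A : ‖v ε‖ ≤ ‖w‖ for every zero w
  have hA : ∀ ε : ℝ, 0 < ε → ∀ w : H, F w = 0 → ‖v ε‖ ≤ ‖w‖ := by
    intro ε hε w hw
    have h := hFm (v ε) w
    rw [hw, hF' ε hε, sub_zero, inner_neg_left, real_inner_smul_left] at h
    have h3 : ⟪v ε, v ε - w⟫ ≤ 0 :=
      le_of_mul_le_mul_left (by linarith : ε * ⟪v ε, v ε - w⟫ ≤ ε * 0) hε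
    rw [inner_sub_right, real_inner_self_eq_norm_sq] at h3
    have h4 : ⟪v ε, w⟫ ≤ ‖v ε‖ * ‖w‖ := real_inner_le_norm _ _
    nlinarith [norm_nonneg (v ε), norm_nonneg w]
  -- Lemma B : ε⟪vε,vε⟫ + δ⟪vδ,vδ⟫ ≤ (ε+δ)⟪vε,vδ⟫
  have hB : ∀ ε : ℝ, 0 < ε → ∀ δ : ℝ, 0 < δ →
      ε * ‖v ε‖ ^ 2 + δ * ‖v δ‖ ^ 2 ≤ (ε + δ) * ⟪v ε, v δ⟫ := by
    intro ε hε δ hδ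
    have h := hFm (v ε) (v δ)
    rw [hF' ε hε, hF' δ hδ] at h
    simp only [inner_sub_left, inner_sub_right, inner_neg_left, real_inner_smul_left] at h
    have e1 : ⟪v ε, v ε⟫ = ‖v ε‖ ^ 2 := real_inner_self_eq_norm_sq _
    have e2 : ⟪v δ, v δ⟫ = ‖v δ‖ ^ 2 := real_inner_self_eq_norm_sq _
    have e3 : ⟪v δ, v ε⟫ = ⟪v ε, v δ⟫ := real_inner_comm _ _
    rw [e1, e2, e3] at h
    nlinarith [h]
  -- Lemma C : norm is antitone in 1/ε : ε ≤ δ → ‖v δ‖ ≤ ‖v ε‖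
  have hC : ∀ ε : ℝ, 0 < ε → ∀ δ : ℝ, ε ≤ δ → ‖v δ‖ ≤ ‖v ε‖ := by
    intro ε hε δ hεδ
    have hδ : 0 < δ := lt_of_lt_of_le hε hεδ
    have hb := hB ε hε δ hδ
    have h4 : ⟪v ε, v δ⟫ ≤ ‖v ε‖ * ‖v δ‖ := real_inner_le_norm _ _
    by_contra hcon
    push_neg at hcon
    have ha := norm_nonneg (v ε)
    have hbn := norm_nonneg (v δ)
    have h5 : (ε + δ) * ⟪v ε, v δ⟫ ≤ (ε + δ) * (‖v ε‖ * ‖v δ‖) :=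
      mul_le_mul_of_nonneg_left h4 (by linarith)
    have h6 : 0 < (‖v δ‖ - ‖v ε‖) * (δ * ‖v δ‖ - ε * ‖v ε‖) := by
      apply mul_pos (sub_pos.2 hcon)
      have : ε * ‖v ε‖ < ε * ‖v δ‖ := by nlinarith
      nlinarith
    nlinarith [h5, h6, hb]
  -- Lemma D : for ε ≤ δ, ‖v ε - v δ‖² ≤ ‖v ε‖² - ‖v δ‖²
  have hD : ∀ ε : ℝ, 0 < ε → ∀ δ : ℝ, ε ≤ δ →
      ‖v ε - v δ‖ ^ 2 ≤ ‖v ε‖ ^ 2 - ‖v δ‖ ^ 2 := by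
    intro ε hε δ hεδ
    have hδ : 0 < δ := lt_of_lt_of_le hε hεδ
    have hb := hB ε hε δ hδ
    have hmono := hC ε hε δ hεδ
    have hinner : ‖v δ‖ ^ 2 ≤ ⟪v ε, v δ⟫ := by
      have hsq : ‖v δ‖ ^ 2 ≤ ‖v ε‖ ^ 2 := by nlinarith [norm_nonneg (v δ)]
      have hmul : ε * ‖v δ‖ ^ 2 ≤ ε * ‖v ε‖ ^ 2 := mul_le_mul_of_nonneg_left hsq hε.le
      have h1 : (ε + δ) * ‖v δ‖ ^ 2 ≤ (ε + δ) * ⟪v ε, v δ⟫ := by nlinarith [hb, hmul]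
      exact le_of_mul_le_mul_left h1 (by linarith)
    have hexp : ‖v ε - v δ‖ ^ 2 = ‖v ε‖ ^ 2 - 2 * ⟪v ε, v δ⟫ + ‖v δ‖ ^ 2 := by
      rw [@norm_sub_sq_real]
    rw [hexp]
    linarith
  -- Boundedness set of squared norms
  set S : Set ℝ := (fun ε => ‖v ε‖ ^ 2) '' Set.Ioi 0 with hS
  have hSne : S.Nonempty := ⟨‖v 1‖ ^ 2, 1, by norm_num, rfl⟩
  have hSbdd : BddAbove S := by
    refine ⟨‖z‖ ^ 2, ?_⟩
    rintro r ⟨ε, hε, rfl⟩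
    simpa using pow_le_pow_left₀ (norm_nonneg (v ε)) (hA ε hε z hz) 2
  set L : ℝ := sSup S with hL
  have hle : ∀ ε : ℝ, 0 < ε → ‖v ε‖ ^ 2 ≤ L := fun ε hε =>
    le_csSup hSbdd ⟨ε, hε, rfl⟩
  -- Cauchy
  have hcauchy : Cauchy (Filter.map v (nhdsWithin 0 (Set.Ioi 0))) := by
    rw [Metric.cauchy_iff]
    constructor
    · exact map_neBot
    · intro η hη
      obtain ⟨r, ⟨ε₁, hε₁, rfl⟩, hr⟩ :=
        exists_lt_of_lt_csSup hSne (sub_lt_self L (div_pos (pow_pos hη 2) two_pos))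
      have hr' : L - η ^ 2 / 2 < ‖v ε₁‖ ^ 2 := hr
      have hε₁' : (0:ℝ) < ε₁ := hε₁
      refine ⟨v '' Set.Ioo 0 ε₁,
        image_mem_map (Ioo_mem_nhdsGT_of_mem ⟨le_refl 0, hε₁'⟩), ?_⟩
      have key : ∀ a ∈ Set.Ioo (0:ℝ) ε₁, ∀ b ∈ Set.Ioo (0:ℝ) ε₁, a ≤ b →
          dist (v a) (v b) < η := by
        intro a ha b hb hab
        have hda := hD a ha.1 b hab
        have h1 : ‖v a‖ ^ 2 ≤ L := hle a ha.1
        have h2 : ‖v ε₁‖ ≤ ‖v b‖ := hC b hb.1 ε₁ hb.2.le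
        have h3 : L - η ^ 2 / 2 < ‖v b‖ ^ 2 := by
          have := pow_le_pow_left₀ (norm_nonneg (v ε₁)) h2 2
          linarith
        have hη2 : 0 < η ^ 2 := by positivity
        have h4 : dist (v a) (v b) ^ 2 < η ^ 2 := by
          rw [dist_eq_norm]
          linarith
        exact lt_of_pow_lt_pow_left₀ 2 hη.le h4
      rintro x ⟨a, ha, rfl⟩ y ⟨b, hb, rfl⟩
      rcases le_total a b with hab | hab
      · exact key a ha b hb hab
      · rw [dist_comm]; exact key b hb a ha hab
  obtain ⟨v₀, hv₀⟩ := CompleteSpace.complete hcauchy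
  have htend : Tendsto v (nhdsWithin 0 (Set.Ioi 0)) (nhds v₀) := hv₀
  refine ⟨v₀, ?_, ?_, htend⟩
  · -- F v₀ = 0
    have h1 : Tendsto (fun ε => F (v ε)) (nhdsWithin 0 (Set.Ioi 0)) (nhds (F v₀)) :=
      (hFc.tendsto v₀).comp htend
    have h2 : Tendsto (fun ε => F (v ε)) (nhdsWithin 0 (Set.Ioi 0)) (nhds 0) := by
      have hnorm : ∀ᶠ ε in nhdsWithin (0:ℝ) (Set.Ioi 0),
          ‖F (v ε)‖ ≤ ε * ‖z‖ := by
        filter_upwards [self_mem_nhdsWithin] with ε hε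
        have hε' : (0:ℝ) < ε := hε
        rw [hF' ε hε', norm_neg, norm_smul, Real.norm_eq_abs, abs_of_pos hε']
        exact mul_le_mul_of_nonneg_left (hA ε hε' z hz) hε'.le
      have hg : Tendsto (fun ε : ℝ => ε * ‖z‖) (nhdsWithin 0 (Set.Ioi 0)) (nhds 0) := by
        have h0 : Tendsto (fun ε : ℝ => ε * ‖z‖) (nhds 0) (nhds (0 * ‖z‖)) :=
          (continuous_id.mul continuous_const).tendsto 0
        rw [zero_mul] at h0
        exact h0.mono_left nhdsWithin_le_nhds
      exact squeeze_zero_norm' hnorm hg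
    exact tendsto_nhds_unique h1 h2
  · intro w hw
    have hnt : Tendsto (fun ε => ‖v ε‖) (nhdsWithin 0 (Set.Ioi 0)) (nhds ‖v₀‖) :=
      htend.norm
    refine le_of_tendsto hnt ?_
    filter_upwards [self_mem_nhdsWithin] with ε hε
    exact hA ε hε w hw
end
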